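/- arXiv:0803.3708 — 4 statements merged into one kernel-verified Lean document; each statement's English description precedes it below -/
import Mathlib

section
/- Let g be a permutation of a finite set X. The number of g-invariant multisets of size k with elements from X equals the coefficient of tᵏ in the product ∏_c 1/(1 - t^{ℓ(c)}), where c runs over the cycles of g on X and ℓ(c) is the length of the cycle c. -/
open MulAction Finset PowerSeries

/-- The series `∑ n, t^{ℓ n}`, i.e. the inverse of `1 - t^ℓ`. -/
private noncomputable def stmt5geo (ℓ : ℕ) : PowerSeries ℤ :=
  PowerSeries.mk fun n => if ℓ ∣ n then 1 else 0

private lemma stmt5geo_spec {ℓ : ℕ} (hℓ : ℓ ≠ 0) :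
    (1 - PowerSeries.X ^ ℓ) * stmt5geo ℓ = 1 := by
  ext n
  rw [sub_mul, one_mul, map_sub, coeff_one, coeff_X_pow_mul', stmt5geo]
  rcases le_or_gt ℓ n with h | h
  · rw [if_pos h, coeff_mk, coeff_mk, if_neg (by omega : n ≠ 0)]
    have hiff : ℓ ∣ n ↔ ℓ ∣ n - ℓ := by
      constructor
      · intro hd; exact Nat.dvd_sub hd dvd_rfl
      · intro hd
        have := Nat.dvd_add hd (dvd_refl ℓ)
        rwa [Nat.sub_add_cancel h] at this
    by_cases hd : ℓ ∣ n
    · rw [if_pos hd, if_pos (hiff.1 hd)]; ring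
    · rw [if_neg hd, if_neg fun h2 => hd (hiff.2 h2)]; ring
  · rw [if_neg (by omega), coeff_mk, sub_zero]
    by_cases hn : n = 0
    · subst hn; simp
    · rw [if_neg hn, if_neg fun hd => hn (Nat.eq_zero_of_dvd_of_lt hd h)]

/-- The number of g-invariant multisets of size k from X is the coefficient of tᵏ in
∏_c (1 - t^{ℓ(c)})⁻¹, the product over the cycles (i.e. the orbits of ⟨g⟩) of g on X.
The inverse factors are encoded as a family F with (1 - t^{ℓ(c)}) · F c = 1. -/
theorem stmt5 (X : Type*) [Fintype X] (g : Equiv.Perm X) (k : ℕ)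
    (F : Quotient (MulAction.orbitRel (Subgroup.zpowers g) X) → PowerSeries ℤ)
    (hF : ∀ c, (1 - PowerSeries.X ^
        Nat.card ↥(MulAction.orbit (Subgroup.zpowers g) (Quotient.out c))) * F c = 1) :
    (Nat.card {m : Multiset X // Multiset.card m = k ∧ Multiset.map ⇑g m = m} : ℤ) =
      PowerSeries.coeff k (∏ᶠ c, F c) := by
  classical
  letI : Fintype (Quotient (MulAction.orbitRel (Subgroup.zpowers g) X)) := Fintype.ofFinite _
  set q : X → Quotient (MulAction.orbitRel (Subgroup.zpowers g) X) :=
    Quotient.mk (MulAction.orbitRel (Subgroup.zpowers g) X) with hqdef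
  set L : Quotient (MulAction.orbitRel (Subgroup.zpowers g) X) → ℕ :=
    fun c => Nat.card ↥(MulAction.orbit (Subgroup.zpowers g) (Quotient.out c)) with hLdef
  have hL : ∀ c, L c ≠ 0 := fun c =>
    (@Nat.card_pos _ ⟨⟨_, MulAction.mem_orbit_self _⟩⟩ _).ne'
  -- `q x = c` iff `x` lies in the orbit of `c.out`
  have hq : ∀ (x : X) (c : Quotient (MulAction.orbitRel (Subgroup.zpowers g) X)),
      q x = c ↔ x ∈ MulAction.orbit (Subgroup.zpowers g) (Quotient.out c) := by
    intro x c
    conv_lhs => rw [← Quotient.out_eq c]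
    rw [hqdef, Quotient.eq]
    exact MulAction.orbitRel_apply
  -- the quotient map is invariant under integer powers of g
  have hqg : ∀ (n : ℤ) (x : X), q ((g ^ n) x) = q x := by
    intro n x
    apply Quotient.sound
    refine MulAction.orbitRel_apply.mpr ?_
    exact ⟨⟨g ^ n, Subgroup.zpow_mem _ (Subgroup.mem_zpowers g) n⟩, rfl⟩
  -- counts of an invariant multiset are constant on orbits
  have hconst : ∀ (m : Multiset X), Multiset.map ⇑g m = m →
      ∀ x y : X, q x = q y → m.count x = m.count y := by
    intro m hm
    have hstep : ∀ x : X, m.count (g x) = m.count x := by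
      intro x
      conv_lhs => rw [← hm]
      exact Multiset.count_map_eq_count' (⇑g) m g.injective x
    have hpow : ∀ (n : ℕ) (x : X), m.count ((g ^ n) x) = m.count x := by
      intro n
      induction n with
      | zero => simp
      | succ n ih =>
        intro x
        have : (g ^ (n + 1)) x = (g ^ n) (g x) := by
          rw [pow_succ]; rfl
        rw [this, ih (g x), hstep x]
    have hzpow : ∀ (n : ℤ) (x : X), m.count ((g ^ n) x) = m.count x := by
      intro n x
      rcases n with n | n
      · simpa using hpow n x
      · have hx : (g ^ (n + 1)) ((g ^ Int.negSucc n) x) = x := by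
          rw [← Equiv.Perm.mul_apply, ← zpow_natCast, ← zpow_add]
          have h0 : ((n + 1 : ℕ) : ℤ) + Int.negSucc n = 0 := by
            rw [Int.negSucc_eq]; push_cast; ring
          rw [h0, zpow_zero]; rfl
        calc m.count ((g ^ Int.negSucc n) x)
            = m.count ((g ^ (n + 1)) ((g ^ Int.negSucc n) x)) := (hpow (n + 1) _).symm
          _ = m.count x := by rw [hx]
    intro x y hxy
    rw [hqdef, Quotient.eq] at hxy
    obtain ⟨⟨h, hh⟩, hhx⟩ := MulAction.orbitRel_apply.mp hxy
    obtain ⟨n, rfl⟩ := Subgroup.mem_zpowers_iff.mp hh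
    have : x = (g ^ n) y := hhx.symm
    rw [this, hzpow n y]
  -- the fiber of the quotient map over c, as a finset, has cardinality L c
  have hfiber : ∀ c, (univ.filter fun x => q x = c).card = L c := by
    intro c
    have hset : MulAction.orbit (Subgroup.zpowers g) (Quotient.out c)
        = ↑(univ.filter fun x => q x = c) := by
      ext x
      simp only [coe_filter, mem_univ, true_and, Set.mem_setOf_eq]
      exact (hq x c).symm
    calc (univ.filter fun x => q x = c).card
        = (↑(univ.filter fun x => q x = c) : Set X).ncard := (Set.ncard_coe_finset _).symm
      _ = (MulAction.orbit (Subgroup.zpowers g) (Quotient.out c)).ncard := by rw [hset]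
      _ = L c := (Nat.card_coe_set_eq _).symm
  -- cardinality of a multiset as a sum of counts over the fintype
  have hcardsum : ∀ m : Multiset X, ∑ x : X, m.count x = Multiset.card m := by
    intro m
    rw [← m.toFinset_sum_count_eq]
    exact (Finset.sum_subset (subset_univ _) (by
      intro x _ hx; simpa [Multiset.count_eq_zero] using hx)).symm
  have hq1 : ∀ y : X, q (g⁻¹ y) = q y := fun y => by simpa using hqg (-1) y
  have hsum1 : ∀ m : Multiset X, Multiset.map ⇑g m = m →
      ∑ c, L c * m.count (Quotient.out c) = Multiset.card m := by
    intro m hm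
    calc ∑ c, L c * m.count (Quotient.out c)
        = ∑ c, ∑ _x ∈ univ.filter (fun x => q x = c), m.count (Quotient.out c) := by
          refine Finset.sum_congr rfl fun c _ => ?_
          rw [Finset.sum_const, smul_eq_mul, hfiber c]
      _ = ∑ c, ∑ x ∈ univ.filter (fun x => q x = c), m.count x := by
          refine Finset.sum_congr rfl fun c _ => Finset.sum_congr rfl fun x hx => ?_
          have hxc : q x = c := (Finset.mem_filter.mp hx).2
          exact hconst m hm _ _ (by rw [hxc]; exact Quotient.out_eq c)
      _ = ∑ x : X, m.count x := Finset.sum_fiberwise univ q _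
      _ = Multiset.card m := hcardsum m
  have hsum2 : ∀ v : Quotient (MulAction.orbitRel (Subgroup.zpowers g) X) → ℕ, ∑ x : X, v (q x) = ∑ c, L c * v c := by
    intro v
    rw [← Finset.sum_fiberwise' univ q v]
    refine Finset.sum_congr rfl fun c _ => ?_
    rw [Finset.sum_const, smul_eq_mul, hfiber c]
  set T : Finset (Quotient (MulAction.orbitRel (Subgroup.zpowers g) X) →₀ ℕ) :=
    (finsuppAntidiag univ k).filter (fun l => ∀ c ∈ univ, L c ∣ l c) with hT
  have hmemT : ∀ l : Quotient (MulAction.orbitRel (Subgroup.zpowers g) X) →₀ ℕ,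
      l ∈ T ↔ (∑ c, l c = k ∧ ∀ c, L c ∣ l c) := by
    intro l
    rw [hT, Finset.mem_filter, mem_finsuppAntidiag]
    constructor
    · rintro ⟨⟨h1, -⟩, h2⟩
      exact ⟨h1, fun c => h2 c (mem_univ c)⟩
    · rintro ⟨h1, h2⟩
      exact ⟨⟨h1, subset_univ _⟩, fun c _ => h2 c⟩
  -- the equivalence between invariant multisets of size k and T
  have e : {m : Multiset X // Multiset.card m = k ∧ Multiset.map ⇑g m = m} ≃ {l // l ∈ T} := by
    refine Equiv.mk
      (fun m => ⟨Finsupp.equivFunOnFinite.symm fun c => L c * (m.1.count (Quotient.out c)), ?_⟩)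
      (fun l => ⟨∑ x : X, Multiset.replicate (l.1 (q x) / L (q x)) x, ?_, ?_⟩) ?_ ?_
    · -- toFun lands in T
      rw [hmemT]
      simp only [Finsupp.coe_equivFunOnFinite_symm]
      exact ⟨by rw [hsum1 m.1 m.2.2, m.2.1], fun c => dvd_mul_right _ _⟩
    · -- card of invFun is k
      obtain ⟨hl1, hl2⟩ := (hmemT l.1).mp l.2
      have hcard' : Multiset.card (∑ x : X, Multiset.replicate (l.1 (q x) / L (q x)) x)
          = ∑ x : X, l.1 (q x) / L (q x) := by simp
      rw [hcard', hsum2 (fun c => l.1 c / L c)]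
      calc ∑ c, L c * (l.1 c / L c) = ∑ c, l.1 c :=
            Finset.sum_congr rfl fun c _ => Nat.mul_div_cancel' (hl2 c)
        _ = k := hl1
    · -- invFun is g-invariant
      obtain ⟨hl1, hl2⟩ := (hmemT l.1).mp l.2
      ext y
      have h1 : Multiset.count y (Multiset.map ⇑g
          (∑ x : X, Multiset.replicate (l.1 (q x) / L (q x)) x))
          = Multiset.count (g⁻¹ y) (∑ x : X, Multiset.replicate (l.1 (q x) / L (q x)) x) := by
        conv_lhs => rw [show y = g (g⁻¹ y) by simp]
        exact Multiset.count_map_eq_count' (⇑g) _ g.injective _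
      rw [h1]
      simp only [Multiset.count_sum', Multiset.count_replicate]
      simp
      rw [← Equiv.Perm.inv_def, hq1 y]
    · -- left inverse
      rintro ⟨m, hm1, hm2⟩
      apply Subtype.ext
      dsimp only
      ext y
      simp only [Multiset.count_sum', Multiset.count_replicate,
        Finsupp.coe_equivFunOnFinite_symm]
      rw [Finset.sum_ite_eq' univ y _]
      simp only [mem_univ, if_true]
      rw [Nat.mul_div_cancel_left _ (Nat.pos_of_ne_zero (hL _))]
      exact hconst m hm2 _ _ (Quotient.out_eq (q y))
    · -- right inverse
      rintro ⟨l, hl⟩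
      obtain ⟨hl1, hl2⟩ := (hmemT l).mp hl
      apply Subtype.ext
      dsimp only
      ext c
      simp only [Finsupp.coe_equivFunOnFinite_symm]
      simp only [Multiset.count_sum', Multiset.count_replicate]
      rw [Finset.sum_ite_eq' univ (Quotient.out c) _]
      simp only [mem_univ, if_true]
      rw [show q (Quotient.out c) = c from Quotient.out_eq c]
      exact Nat.mul_div_cancel' (hl2 c)
  rw [Nat.card_congr e, Nat.card_eq_fintype_card, Fintype.card_coe]
  -- now compute the coefficient of the product
  have hF' : ∀ c, (1 - PowerSeries.X ^ L c) * F c = 1 := hF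
  have hFgeo : ∀ c, F c = stmt5geo (L c) := by
    intro c
    have h2 := stmt5geo_spec (hL c)
    calc F c = ((1 - PowerSeries.X ^ L c) * stmt5geo (L c)) * F c := by rw [h2, one_mul]
      _ = stmt5geo (L c) * ((1 - PowerSeries.X ^ L c) * F c) := by ring
      _ = stmt5geo (L c) := by rw [hF' c, mul_one]
  rw [finprod_eq_prod_of_fintype]
  rw [Finset.prod_congr rfl (fun c _ => hFgeo c), PowerSeries.coeff_prod]
  have hterm : ∀ l ∈ finsuppAntidiag (univ : Finset (Quotient (MulAction.orbitRel (Subgroup.zpowers g) X))) k,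
      ∏ c, (PowerSeries.coeff (l c)) (stmt5geo (L c))
        = if (∀ c ∈ (univ : Finset (Quotient (MulAction.orbitRel (Subgroup.zpowers g) X))), L c ∣ l c) then (1 : ℤ) else 0 := by
    intro l _
    simp only [stmt5geo, coeff_mk]
    rw [Finset.prod_boole]
    congr
  rw [Finset.sum_congr rfl hterm]
  rw [Finset.sum_boole]
end

section
/- Double coset formula in the Burnside ring: for a finite group G and subgroups H, K ≤ G, the product G-set (G/H) × (G/K) with the diagonal G-action decomposes G-equivariantly as ⨆_{HgK ∈ H\G/K} G/(H ∩ gKg⁻¹), the disjoint union over a set of representatives g of the double cosets HgK. -/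
namespace Stmt9Aux

variable {G : Type*} [Group G] (H K : Subgroup G)

/-- The intersection subgroup attached to a double coset. -/
noncomputable abbrev L (q : DoubleCoset.Quotient (H : Set G) (K : Set G)) : Subgroup G :=
  H ⊓ Subgroup.map (MulAut.conj (Quotient.out q)).toMonoidHom K

/-- The map `⟨q, xL⟩ ↦ (xH, (x * out q)K)`. -/
noncomputable def F (p : Σ q : DoubleCoset.Quotient (H : Set G) (K : Set G), G ⧸ L H K q) :
    (G ⧸ H) × (G ⧸ K) :=
  Quotient.liftOn' p.2 (fun x => (↑x, ↑(x * Quotient.out p.1))) (by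
    intro a b hab
    rw [QuotientGroup.leftRel_apply, Subgroup.mem_inf] at hab
    obtain ⟨h1, h2⟩ := hab
    obtain ⟨k, hk, hk2⟩ := h2
    refine Prod.ext ?_ ?_
    · exact QuotientGroup.eq.mpr h1
    · apply QuotientGroup.eq.mpr
      have : (a * Quotient.out p.1)⁻¹ * (b * Quotient.out p.1) =
          (Quotient.out p.1)⁻¹ * (a⁻¹ * b) * Quotient.out p.1 := by group
      rw [this, ← hk2]
      simpa [MulAut.conj_apply, mul_assoc] using hk)

theorem F_mk (q : DoubleCoset.Quotient (H : Set G) (K : Set G)) (x : G) :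
    F H K ⟨q, Quotient.mk'' x⟩ = (↑x, ↑(x * Quotient.out q)) := rfl

theorem F_smul (g : G) (p : Σ q : DoubleCoset.Quotient (H : Set G) (K : Set G), G ⧸ L H K q) :
    F H K ⟨p.1, g • p.2⟩ = ((g • (F H K p).1, g • (F H K p).2) : (G ⧸ H) × (G ⧸ K)) := by
  obtain ⟨q, y⟩ := p
  induction y using QuotientGroup.induction_on with
  | H x =>
    rw [MulAction.Quotient.smul_mk, smul_eq_mul]
    show F H K ⟨q, Quotient.mk'' (g * x)⟩ = _
    rw [F_mk]
    have h2 : F H K ⟨q, (QuotientGroup.mk x : G ⧸ L H K q)⟩ = (↑x, ↑(x * Quotient.out q)) :=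
      F_mk H K q x
    rw [h2]
    refine Prod.ext ?_ ?_
    · exact (MulAction.Quotient.smul_mk H g x).symm
    · show (↑(g * x * Quotient.out q) : G ⧸ K) = g • (↑(x * Quotient.out q) : G ⧸ K)
      rw [mul_assoc, MulAction.Quotient.smul_mk, smul_eq_mul]

theorem F_injective : Function.Injective (F H K) := by
  rintro ⟨q, y⟩ ⟨q', y'⟩ h
  induction y using Quotient.inductionOn' with
  | h x =>
  induction y' using Quotient.inductionOn' with
  | h x' =>
    rw [F_mk, F_mk, Prod.ext_iff] at h
    obtain ⟨h1, h2⟩ := h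
    rw [QuotientGroup.eq] at h1 h2
    -- h1 : x⁻¹ * x' ∈ H, h2 : (x * out q)⁻¹ * (x' * out q') ∈ K
    have hqq : q = q' := by
      have : DoubleCoset.mk H K (Quotient.out q) = DoubleCoset.mk H K (Quotient.out q') := by
        rw [DoubleCoset.eq]
        refine ⟨(x⁻¹ * x')⁻¹, H.inv_mem h1, (x * Quotient.out q)⁻¹ * (x' * Quotient.out q'), h2, ?_⟩
        group
      rwa [DoubleCoset.out_eq', DoubleCoset.out_eq'] at this
    subst hqq
    refine Sigma.ext rfl ?_
    simp only [heq_eq_eq]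
    apply Quotient.sound'
    rw [QuotientGroup.leftRel_apply, Subgroup.mem_inf]
    refine ⟨h1, ⟨(Quotient.out q)⁻¹ * (x⁻¹ * x') * Quotient.out q, ?_, ?_⟩⟩
    · have : (Quotient.out q)⁻¹ * (x⁻¹ * x') * Quotient.out q =
        (x * Quotient.out q)⁻¹ * (x' * Quotient.out q) := by group
      rw [this]; exact h2
    · simp [MulAut.conj_apply]; group

theorem F_surjective : Function.Surjective (F H K) := by
  rintro ⟨a, b⟩
  induction a using Quotient.inductionOn' with
  | h a =>
  induction b using Quotient.inductionOn' with
  | h b =>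
    set q := DoubleCoset.mk H K (a⁻¹ * b) with hq
    have : DoubleCoset.mk H K (Quotient.out q) = DoubleCoset.mk H K (a⁻¹ * b) := by rw [hq, DoubleCoset.out_eq']
    rw [DoubleCoset.eq] at this
    obtain ⟨h, hh, k, hk, hbk⟩ := this
    -- a⁻¹ * b = h * out q * k
    refine ⟨⟨q, Quotient.mk'' (a * h)⟩, ?_⟩
    rw [F_mk]
    refine Prod.ext ?_ ?_
    · show (↑(a * h) : G ⧸ H) = Quotient.mk'' a
      apply QuotientGroup.eq.mpr
      simpa using H.inv_mem hh
    · show (↑(a * h * Quotient.out q) : G ⧸ K) = Quotient.mk'' b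
      apply QuotientGroup.eq.mpr
      have : (a * h * Quotient.out q)⁻¹ * b = k := by
        have : b = a * (h * Quotient.out q * k) := by rw [← hbk]; group
        rw [this]; group
      rw [this]; exact hk

end Stmt9Aux

/-- Double coset formula: (G/H) × (G/K) with the diagonal action decomposes equivariantly
as the disjoint union over the double cosets HgK of the coset spaces G/(H ∩ gKg⁻¹). -/
theorem stmt9 (G : Type*) [Group G] [Fintype G] (H K : Subgroup G) :
    ∃ e : (G ⧸ H) × (G ⧸ K) ≃
        Σ q : DoubleCoset.Quotient (H : Set G) (K : Set G),
          G ⧸ (H ⊓ Subgroup.map (MulAut.conj (Quotient.out q)).toMonoidHom K),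
      ∀ (g : G) (p : (G ⧸ H) × (G ⧸ K)),
        e (g • p.1, g • p.2) = ⟨(e p).1, g • (e p).2⟩ := by
  refine ⟨(Equiv.ofBijective (Stmt9Aux.F H K)
    ⟨Stmt9Aux.F_injective H K, Stmt9Aux.F_surjective H K⟩).symm, ?_⟩
  set e' := Equiv.ofBijective (Stmt9Aux.F H K)
    ⟨Stmt9Aux.F_injective H K, Stmt9Aux.F_surjective H K⟩ with he'
  intro g p
  apply e'.injective
  rw [Equiv.apply_symm_apply]
  have h1 : e' ⟨(e'.symm p).1, g • (e'.symm p).2⟩ = Stmt9Aux.F H K ⟨(e'.symm p).1, g • (e'.symm p).2⟩ := rfl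
  rw [h1, Stmt9Aux.F_smul]
  have h2 : Stmt9Aux.F H K (e'.symm p) = p := e'.apply_symm_apply p
  rw [h2]
end

section
/- The mark homomorphism is injective: if X and Y are finite G-sets such that for every subgroup K ≤ G the number of K-fixed points of X equals that of Y, then X and Y are G-equivariantly isomorphic. -/
open MulAction

section Aux

variable {G : Type*} [Group G]

private lemma smul_mem_orbit_iff' {X : Type*} [MulAction G X] (g : G) (z x : X) :
    g • z ∈ orbit G x ↔ z ∈ orbit G x := by
  constructor
  · intro hm
    obtain ⟨c, hc⟩ := mem_orbit_iff.mp hm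
    exact mem_orbit_iff.mpr ⟨g⁻¹ * c, by rw [mul_smul, hc, inv_smul_smul]⟩
  · intro hm
    obtain ⟨c, hc⟩ := mem_orbit_iff.mp hm
    exact mem_orbit_iff.mpr ⟨g * c, by rw [mul_smul, hc]⟩

private lemma card_split {α : Type*} [Finite α] (p q : α → Prop) :
    Nat.card {a // p a} = Nat.card {a // p a ∧ q a} + Nat.card {a // p a ∧ ¬ q a} := by
  classical
  rw [← Nat.card_sum]
  exact Nat.card_congr <| ((Equiv.sumCompl fun s : {a // p a} => q s.val).symm.trans
    (Equiv.sumCongr (Equiv.subtypeSubtypeEquivSubtypeInter p q)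
      (Equiv.subtypeSubtypeEquivSubtypeInter p fun a => ¬ q a)))

/-- An equivariant bijection between orbits of points with equal stabilizers. -/
private lemma orbit_equiv {X Y : Type*} [MulAction G X] [MulAction G Y] (x : X) (y : Y)
    (hst : stabilizer G x = stabilizer G y) :
    ∃ f : {z : X // z ∈ orbit G x} ≃ {w : Y // w ∈ orbit G y},
      ∀ (g : G) (z : X) (hz : z ∈ orbit G x) (hz' : g • z ∈ orbit G x),
        (f ⟨g • z, hz'⟩ : Y) = g • (f ⟨z, hz⟩ : Y) := by
  classical
  set F : {z : X // z ∈ orbit G x} → {w : Y // w ∈ orbit G y} :=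
    fun z => ⟨(Classical.choose (mem_orbit_iff.mp z.2)) • y, mem_orbit _ _⟩ with hF
  have key : ∀ (g : G) (z : {z : X // z ∈ orbit G x}), g • x = z.val →
      (F z : Y) = g • y := by
    intro g z hg
    have hc := Classical.choose_spec (mem_orbit_iff.mp z.2)
    set c := Classical.choose (mem_orbit_iff.mp z.2)
    have hmem : g⁻¹ * c ∈ stabilizer G x := by
      rw [mem_stabilizer_iff, mul_smul, hc, ← hg, inv_smul_smul]
    rw [hst, mem_stabilizer_iff, mul_smul] at hmem
    have : c • y = g • y := by
      calc c • y = g • (g⁻¹ • (c • y)) := (smul_inv_smul g _).symm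
        _ = g • y := by rw [hmem]
    exact this
  have hbij : Function.Bijective F := by
    constructor
    · rintro ⟨z, hz⟩ ⟨z', hz'⟩ hfe
      obtain ⟨g, hg⟩ := mem_orbit_iff.mp hz
      obtain ⟨g', hg'⟩ := mem_orbit_iff.mp hz'
      have e1 := key g ⟨z, hz⟩ hg
      have e2 := key g' ⟨z', hz'⟩ hg'
      have : (g • y : Y) = g' • y := by
        rw [← e1, ← e2, hfe]
      have hmem : g'⁻¹ * g ∈ stabilizer G y := by
        rw [mem_stabilizer_iff, mul_smul, this, inv_smul_smul]
      rw [← hst, mem_stabilizer_iff, mul_smul] at hmem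
      apply Subtype.ext
      show z = z'
      rw [← hg, ← hg']
      calc g • x = g' • (g'⁻¹ • (g • x)) := (smul_inv_smul g' _).symm
        _ = g' • x := by rw [hmem]
    · rintro ⟨w, hw⟩
      obtain ⟨g, hg⟩ := mem_orbit_iff.mp hw
      refine ⟨⟨g • x, mem_orbit _ _⟩, ?_⟩
      apply Subtype.ext
      rw [key g ⟨g • x, mem_orbit _ _⟩ rfl]
      exact hg
  refine ⟨Equiv.ofBijective F hbij, ?_⟩
  intro g z hz hz'
  obtain ⟨c, hc⟩ := mem_orbit_iff.mp hz
  have e1 : (Equiv.ofBijective F hbij ⟨z, hz⟩ : Y) = c • y := key c ⟨z, hz⟩ hc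
  have e2 : (Equiv.ofBijective F hbij ⟨g • z, hz'⟩ : Y) = (g * c) • y :=
    key (g * c) ⟨g • z, hz'⟩ (by rw [mul_smul, hc])
  rw [e1, e2, mul_smul]

/-- The `G`-action on the complement of an orbit. -/
private def complAction {X : Type*} [MulAction G X] (x : X) :
    MulAction G {z : X // z ∉ orbit G x} where
  smul g z := ⟨g • z.val, fun hmem => z.2 ((smul_mem_orbit_iff' g z.val x).mp hmem)⟩
  one_smul z := Subtype.ext (one_smul G z.val)
  mul_smul g g' z := Subtype.ext (mul_smul g g' z.val)

private lemma card_fix_orbit {X Y : Type*} [MulAction G X] [MulAction G Y] (x : X) (y : Y)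
    (f : {z : X // z ∈ orbit G x} ≃ {w : Y // w ∈ orbit G y})
    (hf : ∀ (g : G) (z : X) (hz : z ∈ orbit G x) (hz' : g • z ∈ orbit G x),
        (f ⟨g • z, hz'⟩ : Y) = g • (f ⟨z, hz⟩ : Y)) (K : Subgroup G) :
    Nat.card {z : X // (∀ k ∈ K, k • z = z) ∧ z ∈ orbit G x}
      = Nat.card {w : Y // (∀ k ∈ K, k • w = w) ∧ w ∈ orbit G y} := by
  have fix : ∀ z : {z : X // (∀ k ∈ K, k • z = z) ∧ z ∈ orbit G x}, ∀ k ∈ K,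
      k • (f ⟨z.val, z.2.2⟩ : Y) = (f ⟨z.val, z.2.2⟩ : Y) := by
    rintro z k hk
    have hz' : k • z.val ∈ orbit G x := (smul_mem_orbit_iff' k z.val x).mpr z.2.2
    calc k • (f ⟨z.val, z.2.2⟩ : Y) = (f ⟨k • z.val, hz'⟩ : Y) := (hf k z.val z.2.2 hz').symm
      _ = (f ⟨z.val, z.2.2⟩ : Y) := by
        have he : (⟨k • z.val, hz'⟩ : {z : X // z ∈ orbit G x}) = ⟨z.val, z.2.2⟩ :=
          Subtype.ext (z.2.1 k hk)
        rw [he]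
  apply Nat.card_eq_of_bijective
    (fun z => ⟨(f ⟨z.val, z.2.2⟩ : Y), fix z, (f ⟨z.val, z.2.2⟩).2⟩)
  constructor
  · rintro ⟨z, hz⟩ ⟨z', hz'⟩ hab
    have h0 := congrArg Subtype.val hab
    have h1 : (f ⟨z, hz.2⟩ : Y) = (f ⟨z', hz'.2⟩ : Y) := h0
    have h2 : (⟨z, hz.2⟩ : {z : X // z ∈ orbit G x}) = ⟨z', hz'.2⟩ :=
      f.injective (Subtype.ext h1)
    have h3 := congrArg Subtype.val h2
    exact Subtype.ext h3
  · rintro ⟨w, hwfix, hwmem⟩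
    set z := f.symm ⟨w, hwmem⟩ with hzdef
    have hfz : f ⟨z.val, z.2⟩ = ⟨w, hwmem⟩ := by rw [hzdef]; exact f.apply_symm_apply _
    have zfix : ∀ k ∈ K, k • z.val = z.val := by
      intro k hk
      have hz' : k • z.val ∈ orbit G x := (smul_mem_orbit_iff' k z.val x).mpr z.2
      have h1 : (f ⟨k • z.val, hz'⟩ : Y) = (f ⟨z.val, z.2⟩ : Y) := by
        rw [hf k z.val z.2 hz', hfz]
        exact hwfix k hk
      have h2 := f.injective (Subtype.ext h1)
      exact congrArg Subtype.val h2
    refine ⟨⟨z.val, zfix, z.2⟩, ?_⟩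
    have h3 := congrArg Subtype.val hfz
    exact Subtype.ext h3

private lemma empty_case {X Y : Type*} [Finite Y] [MulAction G X] [MulAction G Y]
    [IsEmpty X]
    (h : Nat.card {x : X // ∀ k ∈ (⊥ : Subgroup G), k • x = x}
        = Nat.card {y : Y // ∀ k ∈ (⊥ : Subgroup G), k • y = y}) :
    ∃ e : X ≃ Y, ∀ (g : G) (x : X), e (g • x) = g • e x := by
  have hx0 : Nat.card {x : X // ∀ k ∈ (⊥ : Subgroup G), k • x = x} = 0 := by
    simp [Nat.card_eq_zero]
  have hy : Nat.card Y = 0 := by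
    rw [hx0] at h
    have := Nat.card_congr (Equiv.subtypeUnivEquiv (p := fun y : Y =>
      ∀ k ∈ (⊥ : Subgroup G), k • y = y)
      (fun y k hk => by rw [Subgroup.mem_bot] at hk; rw [hk, one_smul]))
    omega
  haveI : IsEmpty Y := by
    rcases Nat.card_eq_zero.mp hy with h' | h'
    · exact h'
    · exact absurd h' (not_infinite_iff_finite.mpr ‹_›)
  exact ⟨Equiv.equivOfIsEmpty X Y, fun g x => isEmptyElim x⟩

private lemma aux {G : Type u} [Group G] [Finite G] :
    ∀ (n : ℕ) (X : Type v) (Y : Type w) [Finite X] [Finite Y]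
      [MulAction G X] [MulAction G Y], Nat.card X ≤ n →
      (∀ K : Subgroup G,
        Nat.card {x : X // ∀ k ∈ K, k • x = x} = Nat.card {y : Y // ∀ k ∈ K, k • y = y}) →
      ∃ e : X ≃ Y, ∀ (g : G) (x : X), e (g • x) = g • e x := by
  intro n
  induction n with
  | zero =>
    intro X Y _ _ _ _ hcard h
    haveI : IsEmpty X := by
      rcases Nat.card_eq_zero.mp (Nat.le_zero.mp hcard) with h' | h'
      · exact h'
      · exact absurd h' (not_infinite_iff_finite.mpr ‹_›)
    exact empty_case (h ⊥)
  | succ n ih =>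
    intro X Y _ _ _ _ hcard h
    classical
    rcases isEmpty_or_nonempty X with hE | hNE
    · exact empty_case (h ⊥)
    obtain ⟨x0⟩ := hNE
    obtain ⟨H, hHS, hmax'⟩ := Set.Finite.exists_maximalFor id
      {K : Subgroup G | ∃ x : X, ∀ k ∈ K, k • x = x} (Set.toFinite _)
      ⟨⊥, x0, fun k hk => by rw [Subgroup.mem_bot] at hk; rw [hk, one_smul]⟩
    have hmax : ∀ K ∈ {K : Subgroup G | ∃ x : X, ∀ k ∈ K, k • x = x}, H ≤ K → H = K :=
      fun K hK hle => le_antisymm hle (hmax' hK hle)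
    obtain ⟨x, hx⟩ := hHS
    have hstabx : H = stabilizer G x :=
      hmax (stabilizer G x) ⟨x, fun k hk => mem_stabilizer_iff.mp hk⟩
        (fun k hk => mem_stabilizer_iff.mpr (hx k hk))
    have hYpos : 0 < Nat.card {y : Y // ∀ k ∈ H, k • y = y} := by
      rw [← h H]
      exact Nat.card_pos_iff.mpr ⟨⟨⟨x, hx⟩⟩, inferInstance⟩
    obtain ⟨⟨y, hy⟩⟩ := (Nat.card_pos_iff.mp hYpos).1
    have hstaby : H = stabilizer G y := by
      have hXpos : 0 < Nat.card {x' : X // ∀ k ∈ stabilizer G y, k • x' = x'} := by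
        rw [h (stabilizer G y)]
        exact Nat.card_pos_iff.mpr
          ⟨⟨⟨y, fun k hk => mem_stabilizer_iff.mp hk⟩⟩, inferInstance⟩
      obtain ⟨⟨x', hx'⟩⟩ := (Nat.card_pos_iff.mp hXpos).1
      exact hmax (stabilizer G y) ⟨x', hx'⟩
        (fun k hk => mem_stabilizer_iff.mpr (hy k hk))
    have hst : stabilizer G x = stabilizer G y := by rw [← hstabx, ← hstaby]
    obtain ⟨f, hf⟩ := orbit_equiv x y hst
    letI actX := complAction (G := G) x
    letI actY := complAction (G := G) y
    -- fixed-point counts for the complements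
    have hyp' : ∀ K : Subgroup G,
        Nat.card {z : {z : X // z ∉ orbit G x} // ∀ k ∈ K, k • z = z}
          = Nat.card {w : {w : Y // w ∉ orbit G y} // ∀ k ∈ K, k • w = w} := by
      intro K
      have hsplitX := card_split (fun z : X => ∀ k ∈ K, k • z = z)
        (fun z => z ∈ orbit G x)
      have hsplitY := card_split (fun w : Y => ∀ k ∈ K, k • w = w)
        (fun w => w ∈ orbit G y)
      have horb := card_fix_orbit x y f hf K
      have hK := h K
      have hcompl : Nat.card {z : X // (∀ k ∈ K, k • z = z) ∧ z ∉ orbit G x}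
          = Nat.card {w : Y // (∀ k ∈ K, k • w = w) ∧ w ∉ orbit G y} := by omega
      have convX : Nat.card {z : {z : X // z ∉ orbit G x} // ∀ k ∈ K, k • z = z}
          = Nat.card {z : X // (∀ k ∈ K, k • z = z) ∧ z ∉ orbit G x} :=
        Nat.card_congr <|
          (Equiv.subtypeEquivRight
              (q := fun s : {z : X // z ∉ orbit G x} => ∀ k ∈ K, k • (s : X) = (s : X))
              (fun s => forall₂_congr fun k hk => Subtype.ext_iff)).trans
          <| (Equiv.subtypeSubtypeEquivSubtypeInter (fun z : X => z ∉ orbit G x)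
              (fun z => ∀ k ∈ K, k • z = z)).trans
          <| Equiv.subtypeEquivRight (fun z => and_comm)
      have convY : Nat.card {w : {w : Y // w ∉ orbit G y} // ∀ k ∈ K, k • w = w}
          = Nat.card {w : Y // (∀ k ∈ K, k • w = w) ∧ w ∉ orbit G y} :=
        Nat.card_congr <|
          (Equiv.subtypeEquivRight
              (q := fun s : {w : Y // w ∉ orbit G y} => ∀ k ∈ K, k • (s : Y) = (s : Y))
              (fun s => forall₂_congr fun k hk => Subtype.ext_iff)).trans
          <| (Equiv.subtypeSubtypeEquivSubtypeInter (fun w : Y => w ∉ orbit G y)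
              (fun w => ∀ k ∈ K, k • w = w)).trans
          <| Equiv.subtypeEquivRight (fun w => and_comm)
      rw [convX, convY, hcompl]
    have hlt : Nat.card {z : X // z ∉ orbit G x} < Nat.card X := by
      haveI : Fintype X := Fintype.ofFinite X
      rw [Nat.card_eq_fintype_card, Nat.card_eq_fintype_card]
      exact Fintype.card_subtype_lt (not_not.mpr (mem_orbit_self x))
    obtain ⟨e', he'⟩ := ih {z : X // z ∉ orbit G x} {w : Y // w ∉ orbit G y}
      (by omega) hyp'
    refine ⟨(Equiv.sumCompl (· ∈ orbit G x)).symm.trans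
      ((Equiv.sumCongr f e').trans (Equiv.sumCompl (· ∈ orbit G y))), ?_⟩
    intro g z
    by_cases hz : z ∈ orbit G x
    · have hgz : g • z ∈ orbit G x := (smul_mem_orbit_iff' g z x).mpr hz
      simp only [Equiv.trans_apply, Equiv.sumCompl_symm_apply_of_pos hz,
        Equiv.sumCompl_symm_apply_of_pos hgz, Equiv.sumCongr_apply, Sum.map_inl,
        Equiv.sumCompl_apply_inl]
      exact hf g z hz hgz
    · have hgz : g • z ∉ orbit G x := fun hm => hz ((smul_mem_orbit_iff' g z x).mp hm)
      simp only [Equiv.trans_apply, Equiv.sumCompl_symm_apply_of_neg hz,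
        Equiv.sumCompl_symm_apply_of_neg hgz, Equiv.sumCongr_apply, Sum.map_inr,
        Equiv.sumCompl_apply_inr]
      have hsm : (⟨g • z, hgz⟩ : {z : X // z ∉ orbit G x}) = g • (⟨z, hz⟩ : _) :=
        Subtype.ext rfl
      rw [hsm, he' g ⟨z, hz⟩]
      rfl

end Aux

/-- Injectivity of the mark homomorphism: two finite G-sets with the same number of
K-fixed points for every subgroup K are G-equivariantly isomorphic. -/
theorem stmt10 (G : Type*) [Group G] [Fintype G] (X Y : Type*) [Fintype X] [Fintype Y]
    [MulAction G X] [MulAction G Y]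
    (h : ∀ K : Subgroup G,
      Nat.card {x : X // ∀ k ∈ K, k • x = x} = Nat.card {y : Y // ∀ k ∈ K, k • y = y}) :
    ∃ e : X ≃ Y, ∀ (g : G) (x : X), e (g • x) = g • e x :=
  aux (Nat.card X) X Y le_rfl h
end

section
/- Let G be a finite group and φ : X → X a G-equivariant permutation of a finite G-set X. For every m ≥ 1, the fixed point set Fix(φ^m) is a G-subset of X, and if we set Λ^G_m = [Fix(φ^m)] in the Burnside ring of G, then the elements s^G_m = Σ_{d|m} μ(m/d) Λ^G_d are effective (classes of actual G-sets); indeed s^G_m is the class of the set of points of X whose φ-orbit has length exactly m, which is G-invariant. -/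
/-- For a G-equivariant permutation φ of a finite G-set X, the fixed sets Fix(φ^m) are
G-invariant, the set of points of φ-orbit length exactly m is G-invariant, and the virtual
class s^G_m = Σ_{d∣m} μ(m/d) [Fix(φ^d)] equals the class of that G-set in the Burnside
ring; the last equality is expressed through the (injective) mark homomorphism, i.e. by
equality of the numbers of K-fixed points for every subgroup K ≤ G. -/
theorem stmt15 (G : Type*) [Group G] [Fintype G] (X : Type*) [Fintype X] [MulAction G X]
    (φ : Equiv.Perm X) (hφ : ∀ (g : G) (x : X), φ (g • x) = g • φ x) (m : ℕ) (hm : 1 ≤ m) :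
    (∀ (g : G) (x : X), (φ ^ m) x = x → (φ ^ m) (g • x) = g • x) ∧
    (∀ (g : G) (x : X), Function.minimalPeriod ⇑φ x = m →
      Function.minimalPeriod ⇑φ (g • x) = m) ∧
    (∀ K : Subgroup G,
      (∑ d ∈ m.divisors, (ArithmeticFunction.moebius (m / d)) *
          (Nat.card {x : X // (φ ^ d) x = x ∧ ∀ k ∈ K, k • x = x} : ℤ)) =
        (Nat.card {x : X // Function.minimalPeriod ⇑φ x = m ∧ ∀ k ∈ K, k • x = x} : ℤ)) := by
  have hpow : ∀ (n : ℕ) (g : G) (x : X), (φ ^ n) (g • x) = g • (φ ^ n) x := by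
    intro n g x
    induction n with
    | zero => simp
    | succ n ih => simp [pow_succ', Equiv.Perm.mul_apply, ih, hφ]
  have hperiod : ∀ (g : G) (x : X),
      Function.minimalPeriod ⇑φ (g • x) = Function.minimalPeriod ⇑φ x := by
    have key : ∀ (g : G) (x : X),
        Function.minimalPeriod ⇑φ (g • x) ∣ Function.minimalPeriod ⇑φ x := by
      intro g x
      apply Function.IsPeriodicPt.minimalPeriod_dvd
      show (⇑φ)^[_] (g • x) = g • x
      rw [← Equiv.Perm.coe_pow, hpow]
      rw [Equiv.Perm.coe_pow]
      rw [Function.iterate_minimalPeriod]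
    intro g x
    refine Nat.dvd_antisymm (key g x) ?_
    have := key g⁻¹ (g • x)
    rwa [inv_smul_smul] at this
  refine ⟨fun g x hx => by rw [hpow, hx], fun g x hx => by rw [hperiod, hx], fun K => ?_⟩
  -- Möbius inversion
  have hdiv : ∀ n > 0, ∑ d ∈ n.divisors,
      ((Nat.card {x : X // Function.minimalPeriod ⇑φ x = d ∧ ∀ k ∈ K, k • x = x} : ℤ)) =
      (Nat.card {x : X // (φ ^ n) x = x ∧ ∀ k ∈ K, k • x = x} : ℤ) := by
    intro n hn
    have : ∀ (p : X → Prop) [DecidablePred p],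
        (Nat.card {x : X // p x} : ℤ) = ((Finset.univ.filter p).card : ℤ) := by
      intro p _
      rw [Nat.card_eq_fintype_card, Fintype.card_subtype]
    classical
    simp only [this]
    rw [← Nat.cast_sum]
    congr 1
    rw [Finset.card_eq_sum_card_fiberwise
      (f := fun x => Function.minimalPeriod ⇑φ x) (t := n.divisors) ?_]
    · refine Finset.sum_congr rfl fun d hd => ?_
      congr 1
      ext x
      simp only [Finset.mem_filter, Finset.mem_univ, true_and]
      have hfix : Function.minimalPeriod ⇑φ x = d → (φ ^ n) x = x := by
        intro hmp
        have hdvd : Function.minimalPeriod ⇑φ x ∣ n := by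
          rw [hmp]; exact Nat.dvd_of_mem_divisors hd
        exact Function.isPeriodicPt_iff_minimalPeriod_dvd.mpr hdvd
      tauto
    · intro x hx
      simp only [Finset.coe_filter, Set.mem_setOf_eq, Finset.mem_filter, Finset.mem_univ, true_and] at hx
      rw [Finset.mem_coe, Nat.mem_divisors]
      refine ⟨?_, hn.ne'⟩
      apply Function.IsPeriodicPt.minimalPeriod_dvd (n := n)
      exact hx.1
  have := (ArithmeticFunction.sum_eq_iff_sum_mul_moebius_eq (R := ℤ)).mp hdiv m hm
  rw [← this, ← Nat.sum_divisorsAntidiagonal'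
    (f := fun a b => ((ArithmeticFunction.moebius a : ℤ)) *
      (Nat.card {x : X // (φ ^ b) x = x ∧ ∀ k ∈ K, k • x = x} : ℤ))]
  push_cast
  rfl
end
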